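/- Shannon's perfect secrecy bound: suppose X (plaintext), K (key) are independent finite random variables, C = f(X,K) is the ciphertext, and there is a decoder g with g(C,K) = X almost surely. If C is independent of X (perfect secrecy), then H(K) ≥ H(X). -/

import Mathlib

open scoped BigOperators Classical

noncomputable def prob {Ω : Type*} [Fintype Ω] (p : Ω → ℝ) (E : Ω → Prop) : ℝ :=
  ∑ ω, if E ω then p ω else 0

/-- Shannon entropy of a finitely-valued random variable. -/
noncomputable def entropy {Ω A : Type*} [Fintype Ω] [Fintype A] (p : Ω → ℝ) (X : Ω → A) : ℝ :=
  -∑ a, prob p (fun ω => X ω = a) * Real.logb 2 (prob p (fun ω => X ω = a))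

/-! Conditioned on a ciphertext value `c` of positive probability, the plaintext keeps its prior
distribution (perfect secrecy) and is the image under `g c` of the conditional key distribution
(decodability). A deterministic image has no more entropy than its source, so
`H(X) ≤ H(Key | C = c)` for each such `c`; averaging over `c` and using concavity of
`x ↦ -x log x` gives `H(X) ≤ H(Key | C) ≤ H(Key)`. -/

open Finset Real

namespace Real

lemma neg_mul_log_le_negMulLog {x z : ℝ} (hx : 0 ≤ x) (hxz : x ≤ z) :
    -x * log z ≤ negMulLog x := by
  rcases hx.eq_or_lt with rfl | hx
  · simp
  · rw [negMulLog, neg_mul, neg_mul, neg_le_neg_iff]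
    exact mul_le_mul_of_nonneg_left (log_le_log hx hxz) hx.le

lemma negMulLog_add_le {x y : ℝ} (hx : 0 ≤ x) (hy : 0 ≤ y) :
    negMulLog (x + y) ≤ negMulLog x + negMulLog y := by
  have h₁ := neg_mul_log_le_negMulLog hx (le_add_of_nonneg_right hy)
  have h₂ := neg_mul_log_le_negMulLog hy (le_add_of_nonneg_left hx)
  rw [negMulLog]
  linarith

lemma negMulLog_sum_le {ι : Type*} {s : Finset ι} {q : ι → ℝ} (hq : ∀ i ∈ s, 0 ≤ q i) :
    negMulLog (∑ i ∈ s, q i) ≤ ∑ i ∈ s, negMulLog (q i) :=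
  le_sum_of_subadditive_on_pred negMulLog (0 ≤ ·) negMulLog_zero.le
    (fun _ _ => negMulLog_add_le) (fun _ _ => add_nonneg) q hq

lemma sum_negMulLog_sum_fiber_le {ι α : Type*} [Fintype ι] [Fintype α] {q : ι → ℝ}
    (hq : ∀ i, 0 ≤ q i) (f : ι → α) :
    ∑ a, negMulLog (∑ i with f i = a, q i) ≤ ∑ i, negMulLog (q i) := by
  rw [← sum_fiberwise univ f (fun i => negMulLog (q i))]
  exact sum_le_sum fun a _ => negMulLog_sum_le fun i _ => hq i

lemma sum_negMulLog_le_of_forall_map_eq {γ ι α : Type*} [Fintype γ] [Fintype ι] [Fintype α]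
    {w : γ → ℝ} (hw₀ : ∀ c, 0 ≤ w c) (hw₁ : ∑ c, w c = 1) {q : γ → ι → ℝ}
    (hq : ∀ c i, 0 ≤ q c i) {x : α → ℝ} (g : γ → ι → α)
    (hx : ∀ c, w c ≠ 0 → ∀ a, x a = ∑ i with g c i = a, q c i) :
    ∑ a, negMulLog (x a) ≤ ∑ i, negMulLog (∑ c, w c * q c i) := by
  have h_map : ∀ c, w c * ∑ a, negMulLog (x a) ≤ w c * ∑ i, negMulLog (q c i) := by
    intro c
    by_cases hc : w c = 0
    · simp [hc]
    · simp only [hx c hc]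
      exact mul_le_mul_of_nonneg_left (sum_negMulLog_sum_fiber_le (hq c) (g c)) (hw₀ c)
  have h_concave : ∀ i, ∑ c, w c * negMulLog (q c i) ≤ negMulLog (∑ c, w c * q c i) := fun i =>
    concaveOn_negMulLog.le_map_sum (fun c _ => hw₀ c) hw₁ fun c _ => Set.mem_Ici.2 (hq c i)
  calc ∑ a, negMulLog (x a) = ∑ c, w c * ∑ a, negMulLog (x a) := by rw [← sum_mul, hw₁, one_mul]
    _ ≤ ∑ c, w c * ∑ i, negMulLog (q c i) := sum_le_sum fun c _ => h_map c
    _ = ∑ i, ∑ c, w c * negMulLog (q c i) := by simp only [mul_sum]; exact sum_comm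
    _ ≤ ∑ i, negMulLog (∑ c, w c * q c i) := sum_le_sum fun i _ => h_concave i

end Real

section Prob

variable {Ω : Type*} [Fintype Ω] {p : Ω → ℝ}

lemma prob_nonneg (hp : ∀ ω, 0 ≤ p ω) (E : Ω → Prop) : 0 ≤ prob p E :=
  sum_nonneg fun ω _ => by split_ifs <;> simp [hp ω]

lemma prob_mono (hp : ∀ ω, 0 ≤ p ω) {E F : Ω → Prop} (h : ∀ ω, E ω → F ω) :
    prob p E ≤ prob p F :=
  sum_le_sum fun ω _ => by
    by_cases hE : E ω
    · simp [hE, h ω hE]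
    · by_cases hF : F ω <;> simp [hE, hF, hp ω]

lemma prob_congr {E F : Ω → Prop} (h : ∀ ω, p ω ≠ 0 → (E ω ↔ F ω)) : prob p E = prob p F :=
  sum_congr rfl fun ω _ => by
    by_cases hω : p ω = 0
    · simp [hω]
    · simp only [h ω hω]

lemma not_of_prob_eq_zero (hp : ∀ ω, 0 ≤ p ω) {E : Ω → Prop} (hE : prob p E = 0) {ω : Ω}
    (hω : p ω ≠ 0) : ¬ E ω := fun hEω => by
  have := (sum_eq_zero_iff_of_nonneg fun ω _ => by split_ifs <;> simp [hp ω]).1 hE ω (mem_univ ω)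
  simp_all

lemma sum_prob_and_eq {B : Type*} (E : Ω → Prop) (Y : Ω → B) (s : Finset B) :
    ∑ b ∈ s, prob p (fun ω => E ω ∧ Y ω = b) = prob p (fun ω => E ω ∧ Y ω ∈ s) := by
  unfold prob
  rw [sum_comm]
  refine sum_congr rfl fun ω _ => ?_
  by_cases hE : E ω <;> simp [hE]

lemma sum_prob_eq_one (hp : ∑ ω, p ω = 1) {B : Type*} [Fintype B] (Y : Ω → B) :
    ∑ b, prob p (fun ω => Y ω = b) = 1 := by
  simpa [prob, hp] using sum_prob_and_eq (p := p) (fun _ => True) Y univ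

lemma prob_mul_div_prob (hp : ∀ ω, 0 ≤ p ω) (F E : Ω → Prop) :
    prob p F * (prob p (fun ω => F ω ∧ E ω) / prob p F) = prob p (fun ω => F ω ∧ E ω) := by
  by_cases hF : prob p F = 0
  · have := prob_mono hp (E := fun ω => F ω ∧ E ω) fun _ h => h.1
    have := prob_nonneg hp (fun ω => F ω ∧ E ω)
    simp only [hF, zero_mul]
    linarith
  · exact mul_div_cancel₀ _ hF

lemma entropy_eq_sum_negMulLog {A : Type*} [Fintype A] (X : Ω → A) :
    entropy p X = (∑ a, negMulLog (prob p (fun ω => X ω = a))) / log 2 := by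
  simp only [entropy, logb, negMulLog, sum_div, ← sum_neg_distrib]
  exact sum_congr rfl fun a _ => by ring

end Prob

lemma entropy_le_of_decodable_of_indep {Ω A K C : Type*} [Fintype Ω] [Fintype A] [Fintype K]
    [Fintype C] {p : Ω → ℝ} (hp0 : ∀ ω, 0 ≤ p ω) (hp1 : ∑ ω, p ω = 1) {X : Ω → A} {Key : Ω → K}
    {Y : Ω → C} (g : C → K → A) (hdec : prob p (fun ω => g (Y ω) (Key ω) ≠ X ω) = 0)
    (hsec : ∀ c a, prob p (fun ω => Y ω = c ∧ X ω = a)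
        = prob p (fun ω => Y ω = c) * prob p (fun ω => X ω = a)) :
    entropy p X ≤ entropy p Key := by
  have h_decode : ∀ ω, p ω ≠ 0 → g (Y ω) (Key ω) = X ω := fun ω hω =>
    not_not.1 (not_of_prob_eq_zero hp0 hdec hω)
  have h_mixture : ∀ k, ∑ c, prob p (fun ω => Y ω = c) *
      (prob p (fun ω => Y ω = c ∧ Key ω = k) / prob p (fun ω => Y ω = c))
        = prob p (fun ω => Key ω = k) := by
    intro k
    calc _ = ∑ c, prob p (fun ω => Key ω = k ∧ Y ω = c) := sum_congr rfl fun c _ => by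
          rw [prob_mul_div_prob hp0 (fun ω => Y ω = c) (fun ω => Key ω = k)]
          exact prob_congr fun ω _ => and_comm
      _ = _ := by simp [sum_prob_and_eq]
  have h_pushforward : ∀ c, prob p (fun ω => Y ω = c) ≠ 0 → ∀ a, prob p (fun ω => X ω = a)
      = ∑ k with g c k = a, prob p (fun ω => Y ω = c ∧ Key ω = k) / prob p (fun ω => Y ω = c) := by
    intro c hc a
    rw [← sum_div, eq_div_iff hc, mul_comm, ← hsec, sum_prob_and_eq]
    refine prob_congr fun ω hω => ?_
    simp only [mem_filter, mem_univ, true_and, ← h_decode ω hω]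
    constructor <;> rintro ⟨rfl, h⟩ <;> exact ⟨rfl, h⟩
  have h_entropy := sum_negMulLog_le_of_forall_map_eq (fun c => prob_nonneg hp0 _)
    (sum_prob_eq_one hp1 Y) (fun c k => div_nonneg (prob_nonneg hp0 _) (prob_nonneg hp0 _))
    g h_pushforward
  simp only [h_mixture] at h_entropy
  rw [entropy_eq_sum_negMulLog, entropy_eq_sum_negMulLog]
  exact div_le_div_of_nonneg_right h_entropy (log_nonneg one_le_two)

theorem shannon_perfect_secrecy_bound_general {Ω A K C : Type*}
    [Fintype Ω] [Fintype A] [Fintype K] [Fintype C]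
    (p : Ω → ℝ) (hp0 : ∀ ω, 0 ≤ p ω) (hp1 : ∑ ω, p ω = 1)
    (X : Ω → A) (Key : Ω → K) (f : A → K → C) (g : C → K → A)
    (hdec : prob p (fun ω => g (f (X ω) (Key ω)) (Key ω) ≠ X ω) = 0)
    (hsec : ∀ c a, prob p (fun ω => f (X ω) (Key ω) = c ∧ X ω = a)
        = prob p (fun ω => f (X ω) (Key ω) = c) * prob p (fun ω => X ω = a)) :
    entropy p Key ≥ entropy p X :=
  entropy_le_of_decodable_of_indep hp0 hp1 g hdec hsec

/-- Shannon's perfect secrecy bound: if plaintext `X` and key `Key` are independent,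
the ciphertext `f (X, Key)` is decodable via `g` almost surely, and the ciphertext is
independent of `X` (perfect secrecy), then `H(Key) ≥ H(X)`. -/
theorem shannon_perfect_secrecy_bound {Ω A K C : Type*}
    [Fintype Ω] [Fintype A] [Fintype K] [Fintype C]
    (p : Ω → ℝ) (hp0 : ∀ ω, 0 ≤ p ω) (hp1 : ∑ ω, p ω = 1)
    (X : Ω → A) (Key : Ω → K) (f : A → K → C) (g : C → K → A)
    (hindep : ∀ a k, prob p (fun ω => X ω = a ∧ Key ω = k)
        = prob p (fun ω => X ω = a) * prob p (fun ω => Key ω = k))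
    (hdec : prob p (fun ω => g (f (X ω) (Key ω)) (Key ω) ≠ X ω) = 0)
    (hsec : ∀ c a, prob p (fun ω => f (X ω) (Key ω) = c ∧ X ω = a)
        = prob p (fun ω => f (X ω) (Key ω) = c) * prob p (fun ω => X ω = a)) :
    entropy p Key ≥ entropy p X :=
  shannon_perfect_secrecy_bound_general p hp0 hp1 X Key f g hdec hsec
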